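/- arXiv:2403.12168 — 6 statements merged into one kernel-verified Lean document; each statement's English description precedes it below -/
import Mathlib

section
/- Let k_1,...,k_n be real numbers with each k_i ≥ 1. Then k_1 + ... + k_n - (n-1) = k_1·k_2·...·k_n if and only if at most one of the numbers k_1,...,k_n is strictly greater than 1. -/
lemma aux_le {ι : Type*} (s : Finset ι) (k : ι → ℝ) (hk : ∀ i ∈ s, 1 ≤ k i) :
    1 + ∑ i ∈ s, (k i - 1) ≤ ∏ i ∈ s, k i := by
  classical
  induction s using Finset.induction_on with
  | empty => simp
  | @insert a s' hx ih =>
    have hk' : ∀ i ∈ s', 1 ≤ k i := fun i hi => hk i (Finset.mem_insert_of_mem hi)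
    have hka : 1 ≤ k a := hk a (Finset.mem_insert_self a s')
    have hS : (0:ℝ) ≤ ∑ i ∈ s', (k i - 1) :=
      Finset.sum_nonneg fun i hi => by linarith [hk' i hi]
    have ihh := ih hk'
    rw [Finset.sum_insert hx, Finset.prod_insert hx]
    nlinarith [hS, hka, ihh]

lemma aux_lt {ι : Type*} (s : Finset ι) (k : ι → ℝ) (hk : ∀ i ∈ s, 1 ≤ k i)
    (a b : ι) (ha : a ∈ s) (hb : b ∈ s) (hab : a ≠ b) (hka : 1 < k a) (hkb : 1 < k b) :
    1 + ∑ i ∈ s, (k i - 1) < ∏ i ∈ s, k i := by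
  classical
  set t := (s.erase a).erase b with ht
  have hbs : b ∈ s.erase a := Finset.mem_erase.2 ⟨hab.symm, hb⟩
  have h1 : insert b t = s.erase a := Finset.insert_erase hbs
  have h2 : insert a (s.erase a) = s := Finset.insert_erase ha
  have hat : a ∉ insert b t := by rw [h1]; exact Finset.notMem_erase a s
  have hbt : b ∉ t := Finset.notMem_erase b _
  have hkt : ∀ i ∈ t, 1 ≤ k i := fun i hi =>
    hk i (Finset.mem_of_mem_erase (Finset.mem_of_mem_erase hi))
  have hS : (0:ℝ) ≤ ∑ i ∈ t, (k i - 1) :=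
    Finset.sum_nonneg fun i hi => by linarith [hkt i hi]
  have ihh := aux_le t k hkt
  have hsum : ∑ i ∈ s, (k i - 1) = (k a - 1) + ((k b - 1) + ∑ i ∈ t, (k i - 1)) := by
    rw [← h2, Finset.sum_insert (Finset.notMem_erase a s), ← h1, Finset.sum_insert hbt]
  have hprod : ∏ i ∈ s, k i = k a * (k b * ∏ i ∈ t, k i) := by
    rw [← h2, Finset.prod_insert (Finset.notMem_erase a s), ← h1, Finset.prod_insert hbt]
  rw [hsum, hprod]
  have hP : (1:ℝ) ≤ ∏ i ∈ t, k i := by linarith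
  have h3 : 0 ≤ k a * k b * (∏ i ∈ t, k i - (1 + ∑ i ∈ t, (k i - 1))) :=
    mul_nonneg (mul_nonneg (by linarith) (by linarith)) (by linarith)
  have h4 : 0 ≤ (k a * k b - 1) * ∑ i ∈ t, (k i - 1) :=
    mul_nonneg (by nlinarith) hS
  nlinarith [mul_pos (sub_pos.2 hka) (sub_pos.2 hkb)]

theorem stmt_1 (n : ℕ) (hn : 1 ≤ n) (k : Fin n → ℝ) (hk : ∀ i, 1 ≤ k i) :
    (∑ i, k i) - ((n : ℝ) - 1) = ∏ i, k i ↔ {i | 1 < k i}.Subsingleton := by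
  classical
  have hcard : (Finset.univ : Finset (Fin n)).card = n := Finset.card_univ.trans (Fintype.card_fin n)
  have hrw : (∑ i, k i) - ((n : ℝ) - 1) = 1 + ∑ i, (k i - 1) := by
    rw [Finset.sum_sub_distrib, Finset.sum_const, hcard]
    push_cast
    ring
  constructor
  · intro h i hi j hj
    by_contra hij
    have := aux_lt Finset.univ k (fun i _ => hk i) i j (Finset.mem_univ i) (Finset.mem_univ j)
      hij hi hj
    rw [← hrw] at this
    linarith [h ▸ this]
  · intro hsub
    rw [hrw]
    by_cases hex : ∃ i, 1 < k i
    · obtain ⟨i0, hi0⟩ := hex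
      have hall : ∀ j, j ≠ i0 → k j = 1 := by
        intro j hj
        by_contra hj1
        have : 1 < k j := lt_of_le_of_ne (hk j) (Ne.symm hj1)
        exact hj (hsub this hi0)
      have hsum : ∑ i, (k i - 1) = k i0 - 1 := by
        rw [← Finset.sum_subset (Finset.subset_univ {i0})]
        · simp
        · intro x _ hx
          simp only [Finset.mem_singleton] at hx
          rw [hall x hx]; ring
      have hprod : ∏ i, k i = k i0 := by
        rw [← Finset.prod_subset (Finset.subset_univ {i0})]
        · simp
        · intro x _ hx
          simp only [Finset.mem_singleton] at hx
          exact hall x hx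
      rw [hsum, hprod]; ring
    · push_neg at hex
      have hall : ∀ i, k i = 1 := fun i => le_antisymm (hex i) (hk i)
      simp [hall]
end

section
/- Let k be a field of characteristic zero that is algebraically closed, let f_i(x_i) = Π_{a ∈ A_i}(x_i - a)^{ν_i(a)} for i = 1,...,n, and let I = (f_1,...,f_n) ⊆ k[x_1,...,x_n]. Then for every polynomial f ∈ k[x_1,...,x_n], the polynomial F := Π_{a ∈ A_1×...×A_n} (f(x) - f(a))^{ν_1(a_1)+...+ν_n(a_n) - n + 1} lies in I. -/
/-!
For a grid point `a`, `f - f(a)` lies in the ideal `(xᵢ - aᵢ)ᵢ`, so in the multinomial expansion of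
its power with exponent `∑ νᵢ(aᵢ) - n + 1` every monomial contains some `(xᵢ - aᵢ)^{νᵢ(aᵢ)}` by
pigeonhole. The product over the grid of the ideals `((xᵢ - aᵢ)^{νᵢ(aᵢ)})ᵢ` is generated by
products that pick a coordinate `c a` at each grid point `a`. Some coordinate `i` is picked, for
every `b ∈ Aᵢ`, at a grid point with `aᵢ = b`: otherwise the point assembled from the missed values
would contradict its own pick. Then `fᵢ` divides that generator.
-/

open MvPolynomial

theorem MvPolynomial.sub_C_eval_mem_span_X_sub_C {σ R : Type*} [CommRing R] (a : σ → R)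
    (f : MvPolynomial σ R) :
    f - C (eval a f) ∈ Ideal.span (Set.range fun i => (X i : MvPolynomial σ R) - C (a i)) := by
  induction f using MvPolynomial.induction_on with
  | C c => simp
  | add p q hp hq =>
    have : p + q - C (eval a (p + q)) = (p - C (eval a p)) + (q - C (eval a q)) := by
      rw [eval_add, map_add]; ring
    exact this ▸ Ideal.add_mem _ hp hq
  | mul_X p i hp =>
    have : p * X i - C (eval a (p * X i)) =
        p * (X i - C (a i)) + C (a i) * (p - C (eval a p)) := by
      rw [eval_mul, eval_X, map_mul]; ring
    exact this ▸ Ideal.add_mem _ (Ideal.mul_mem_left _ _ (Ideal.subset_span ⟨i, rfl⟩))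
      (Ideal.mul_mem_left _ _ hp)

theorem Ideal.pow_mem_span_range_pow {ι R : Type*} [CommSemiring R] [Fintype ι] {d : ι → R}
    (ν : ι → ℕ) {p : R} (hp : p ∈ Ideal.span (Set.range d)) :
    p ^ (∑ i, ν i - Fintype.card ι + 1) ∈ Ideal.span (Set.range fun i => d i ^ ν i) := by
  classical
  obtain ⟨q, rfl⟩ := Ideal.mem_span_range_iff_exists_fun.mp hp
  rw [Finset.sum_pow_eq_sum_piAntidiag]
  refine Ideal.sum_mem _ fun m hm => ?_
  obtain ⟨i, hi⟩ : ∃ i, ν i ≤ m i := by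
    by_contra! hlt
    have hle : ∑ i, (m i + 1) ≤ ∑ i, ν i := Finset.sum_le_sum fun i _ => hlt i
    rw [Finset.sum_add_distrib, (Finset.mem_piAntidiag.mp hm).1] at hle
    simp only [Finset.sum_const, Finset.card_univ, smul_eq_mul, mul_one] at hle
    omega
  have hdvd : d i ^ ν i ∣ ∏ j, (q j * d j) ^ m j := calc
    d i ^ ν i ∣ (q i * d i) ^ m i := mul_pow (q i) (d i) (m i) ▸ (pow_dvd_pow _ hi).mul_left _
    _ ∣ ∏ j, (q j * d j) ^ m j := Finset.dvd_prod_of_mem _ (Finset.mem_univ i)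
  exact Ideal.mem_of_dvd _ (hdvd.mul_left _) (Ideal.subset_span ⟨i, rfl⟩)

theorem Fintype.exists_forall_exists_mem_piFinset {ι α : Type*} [Fintype ι] [DecidableEq ι]
    (A : ι → Finset α) (c : (ι → α) → ι) :
    ∃ i, ∀ b ∈ A i, ∃ a ∈ Fintype.piFinset A, a i = b ∧ c a = i := by
  by_contra! h
  choose b hb hbc using h
  exact hbc (c b) b (Fintype.mem_piFinset.mpr hb) rfl rfl

theorem Fintype.exists_prod_dvd_prod_piFinset {ι α M : Type*} [Fintype ι] [DecidableEq ι]
    [CommMonoid M] (A : ι → Finset α) (g : ι → α → M) (c : (ι → α) → ι) :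
    ∃ i, ∏ b ∈ A i, g i b ∣ ∏ a ∈ Fintype.piFinset A, g (c a) (a (c a)) := by
  classical
  obtain ⟨i, hi⟩ := Fintype.exists_forall_exists_mem_piFinset A c
  refine ⟨i, ?_⟩
  obtain hA | ⟨b, hb⟩ := (A i).eq_empty_or_nonempty
  · simp [hA]
  have : Nonempty (ι → α) := ⟨(hi b hb).choose⟩
  choose! e he hei hec using hi
  calc ∏ b ∈ A i, g i b = ∏ a ∈ (A i).image e, g (c a) (a (c a)) := by
        rw [Finset.prod_image fun x hx y hy hxy => by rw [← hei x hx, ← hei y hy, hxy]]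
        exact Finset.prod_congr rfl fun b hb => by rw [hec b hb, hei b hb]
    _ ∣ ∏ a ∈ Fintype.piFinset A, g (c a) (a (c a)) :=
        Finset.prod_dvd_prod_of_subset _ _ _ (Finset.image_subset_iff.mpr he)

theorem Ideal.prod_span_range_le_span_range_prod {ι α R : Type*} [Fintype ι] [DecidableEq ι]
    [CommSemiring R] (A : ι → Finset α) (g : ι → α → R) :
    ∏ a ∈ Fintype.piFinset A, Ideal.span (Set.range fun i => g i (a i)) ≤
      Ideal.span (Set.range fun i => ∏ b ∈ A i, g i b) := by
  rw [Ideal.prod_span, Ideal.span_le]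
  intro x hx
  obtain ⟨h, hh, rfl⟩ := (Set.mem_finsetProd _ _ _).mp hx
  obtain hι | hι := isEmpty_or_nonempty ι
  · obtain ⟨j, -⟩ := hh (i := isEmptyElim) (Fintype.mem_piFinset.mpr isEmptyElim)
    exact isEmptyElim j
  choose! c hc using fun a (ha : a ∈ Fintype.piFinset A) => hh ha
  obtain ⟨i, hdvd⟩ := Fintype.exists_prod_dvd_prod_piFinset A g c
  rw [← Finset.prod_congr rfl hc]
  exact Ideal.mem_of_dvd _ hdvd (Ideal.subset_span ⟨i, rfl⟩)

theorem stmt_5_general (k : Type*) [Field k] (n : ℕ)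
    (A : Fin n → Finset k) (ν : Fin n → k → ℕ)
    (I : Ideal (MvPolynomial (Fin n) k))
    (hI : I = Ideal.span (Set.range fun i =>
      ∏ a ∈ A i, (MvPolynomial.X i - MvPolynomial.C a) ^ ν i a))
    (f : MvPolynomial (Fin n) k) :
    (∏ a ∈ Fintype.piFinset A,
        (f - MvPolynomial.C (MvPolynomial.eval a f)) ^ ((∑ i, ν i (a i)) - n + 1)) ∈ I := by
  rw [hI]
  refine Ideal.prod_span_range_le_span_range_prod A (fun i b => (X i - C b) ^ ν i b)
    (Ideal.prod_mem_prod fun a _ => ?_)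
  simpa only [Fintype.card_fin] using Ideal.pow_mem_span_range_pow (fun i => ν i (a i)) (sub_C_eval_mem_span_X_sub_C a f)

theorem stmt_5 (k : Type*) [Field k] [CharZero k] [IsAlgClosed k] (n : ℕ)
    (A : Fin n → Finset k) (ν : Fin n → k → ℕ) (hν : ∀ i, ∀ a ∈ A i, 1 ≤ ν i a)
    (I : Ideal (MvPolynomial (Fin n) k))
    (hI : I = Ideal.span (Set.range fun i =>
      ∏ a ∈ A i, (MvPolynomial.X i - MvPolynomial.C a) ^ ν i a))
    (f : MvPolynomial (Fin n) k) :
    (∏ a ∈ Fintype.piFinset A,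
        (f - MvPolynomial.C (MvPolynomial.eval a f)) ^ ((∑ i, ν i (a i)) - n + 1)) ∈ I :=
  stmt_5_general k n A ν I hI f
end

section
/- Let k be a field of characteristic zero with algebraic closure K, let f_1 ∈ k[x_1],...,f_n ∈ k[x_n] be nonconstant univariate polynomials, let I be the ideal they generate in k[x_1,...,x_n] and Ī the ideal they generate in K[x_1,...,x_n], and fix g ∈ k[x_1,...,x_n]. Then the residue class of g generates k[x_1,...,x_n]/I as a k-algebra if and only if the residue class of g generates K[x_1,...,x_n]/Ī as a K-algebra. -/
/-!
Extension of scalars along a field extension `K / k` is faithfully flat, so a `k`-subspace of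
`k[x] / I` is everything as soon as its `K`-span in `K ⊗[k] (k[x] / I)` is. The `K`-span of the
subalgebra generated by `g` is the `K`-subalgebra generated by `1 ⊗ g`, and
`K ⊗[k] (k[x] / I) ≅ K[x] / I K[x]` identifies `1 ⊗ g` with the class of `g`, while `I K[x]` is
exactly the ideal generated by the `f_i` in `K[x]`.
-/

open TensorProduct

namespace Submodule

theorem baseChange_eq_top_iff {R A M : Type*} [CommRing R] [CommRing A] [Algebra R A]
    [Module.FaithfullyFlat R A] [AddCommGroup M] [Module R M] {p : Submodule R M} :
    p.baseChange A = ⊤ ↔ p = ⊤ := by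
  rw [baseChange, LinearMap.range_eq_top, LinearMap.baseChange_eq_ltensor,
    Module.FaithfullyFlat.lTensor_surjective_iff_surjective, ← LinearMap.range_eq_top,
    range_subtype]

end Submodule

namespace Algebra

open Algebra.TensorProduct (includeRight)

theorem toSubmodule_adjoin_image_includeRight {R S A : Type*} [CommSemiring R] [CommSemiring S]
    [Algebra R S] [CommSemiring A] [Algebra R A] (s : Set A) :
    Subalgebra.toSubmodule (adjoin S (includeRight (R := R) (A := S) '' s)) =
      (Subalgebra.toSubmodule (adjoin R s)).baseChange S := by
  rw [adjoin_eq_span, adjoin_eq_span, Submodule.baseChange_span, ← MonoidHom.map_mclosure]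
  rfl

theorem adjoin_image_includeRight_eq_top_iff {R S A : Type*} [CommRing R] [CommRing S]
    [Algebra R S] [Module.FaithfullyFlat R S] [CommRing A] [Algebra R A] (s : Set A) :
    adjoin S (includeRight (R := R) (A := S) '' s) = ⊤ ↔ adjoin R s = ⊤ := by
  rw [← toSubmodule_eq_top, ← toSubmodule_eq_top, toSubmodule_adjoin_image_includeRight,
    Submodule.baseChange_eq_top_iff]

end Algebra

theorem AlgEquiv.adjoin_image_eq_top_iff {R A B : Type*} [CommSemiring R] [Semiring A]
    [Semiring B] [Algebra R A] [Algebra R B] (e : A ≃ₐ[R] B) (s : Set A) :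
    Algebra.adjoin R (e '' s) = ⊤ ↔ Algebra.adjoin R s = ⊤ := by
  have hmap_top : (⊤ : Subalgebra R A).map (e : A →ₐ[R] B) = ⊤ := by
    rw [Algebra.map_top, AlgHom.range_eq_top]
    exact e.surjective
  rw [← hmap_top, ← (Subalgebra.map_injective (f := (e : A →ₐ[R] B)) e.injective).eq_iff,
    ← Algebra.adjoin_image]
  rfl

namespace MvPolynomial

variable {σ R S : Type*} [CommRing R] [CommRing S] [Algebra R S]

noncomputable def tensorQuotientEquiv (I : Ideal (MvPolynomial σ R)) :
    S ⊗[R] (MvPolynomial σ R ⧸ I) ≃ₐ[S]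
      MvPolynomial σ S ⧸ I.map (MvPolynomial.map (algebraMap R S)) :=
  (Algebra.TensorProduct.tensorQuotientEquiv S _ S I).trans <|
    Ideal.quotientEquivAlg _ _ (algebraTensorAlgEquiv R S) <| by
      rw [← Ideal.map_coe Algebra.TensorProduct.includeRight, Ideal.map_map]
      congr 1
      exact RingHom.ext fun p => by simp

@[simp]
theorem tensorQuotientEquiv_one_tmul (I : Ideal (MvPolynomial σ R)) (p : MvPolynomial σ R) :
    tensorQuotientEquiv I ((1 : S) ⊗ₜ[R] Ideal.Quotient.mk I p) =
      Ideal.Quotient.mk _ (MvPolynomial.map (algebraMap R S) p) := by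
  simp [tensorQuotientEquiv]

theorem map_aeval_X (i : σ) (p : Polynomial R) :
    MvPolynomial.map (algebraMap R S) (Polynomial.aeval (X i) p) =
      Polynomial.aeval (X i) (p.map (algebraMap R S)) := by
  simpa [Polynomial.aeval_map_algebraMap] using
    (Polynomial.aeval_algHom_apply (mapAlgHom (σ := σ) (Algebra.ofId R S)) (X i) p).symm

end MvPolynomial

theorem stmt_9_general (k K : Type*) [Field k] [Field K] [Algebra k K] (n : ℕ)
    (f : Fin n → Polynomial k)
    (I : Ideal (MvPolynomial (Fin n) k))
    (hI : I = Ideal.span (Set.range fun i => Polynomial.aeval (MvPolynomial.X i) (f i)))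
    (J : Ideal (MvPolynomial (Fin n) K))
    (hJ : J = Ideal.span (Set.range fun i =>
      Polynomial.aeval (MvPolynomial.X i) ((f i).map (algebraMap k K))))
    (g : MvPolynomial (Fin n) k) :
    Algebra.adjoin k {Ideal.Quotient.mk I g} = ⊤ ↔
      Algebra.adjoin K {Ideal.Quotient.mk J (MvPolynomial.map (algebraMap k K) g)} = ⊤ := by
  obtain rfl : J = I.map (MvPolynomial.map (algebraMap k K)) := by
    rw [hJ, hI, Ideal.map_span, ← Set.range_comp]
    simp only [Function.comp_def, MvPolynomial.map_aeval_X]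
  rw [← Algebra.adjoin_image_includeRight_eq_top_iff (S := K),
    ← (MvPolynomial.tensorQuotientEquiv I).adjoin_image_eq_top_iff, Set.image_singleton,
    Set.image_singleton, Algebra.TensorProduct.includeRight_apply,
    MvPolynomial.tensorQuotientEquiv_one_tmul]

theorem stmt_9 (k K : Type*) [Field k] [CharZero k] [Field K] [Algebra k K]
    [IsAlgClosure k K] (n : ℕ)
    (f : Fin n → Polynomial k) (hf : ∀ i, 0 < (f i).natDegree)
    (I : Ideal (MvPolynomial (Fin n) k))
    (hI : I = Ideal.span (Set.range fun i => Polynomial.aeval (MvPolynomial.X i) (f i)))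
    (J : Ideal (MvPolynomial (Fin n) K))
    (hJ : J = Ideal.span (Set.range fun i =>
      Polynomial.aeval (MvPolynomial.X i) ((f i).map (algebraMap k K))))
    (g : MvPolynomial (Fin n) k) :
    Algebra.adjoin k {Ideal.Quotient.mk I g} = ⊤ ↔
      Algebra.adjoin K {Ideal.Quotient.mk J (MvPolynomial.map (algebraMap k K) g)} = ⊤ :=
  stmt_9_general k K n f I hI J hJ g
end

section
/- Let k be a field of characteristic zero and Δ a finite-dimensional commutative k-algebra. If δ_1,...,δ_n ∈ Δ are such that at most one of their minimal polynomials over k is inseparable, then the k-subalgebra k[δ_1,...,δ_n] is generated by a single element; moreover a primitive element can be taken of the form δ_1 + c_2δ_2 + ... + c_nδ_n with nonzero c_2,...,c_n ∈ k. -/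
/-!
After base change to an algebraic closure `K`, the element `α` is killed by `∏ (X - a) ^ M` over
its eigenvalues `a`, and the separable `β` by `∏ (X - b)`. This splits `K ⊗ Δ` by idempotents
`f a * e b` summing to one, on which `β` acts as the scalar `b` and `γ = α + c • β` has the single
eigenvalue `a + c * b`. For all but finitely many `c` these eigenvalues are distinct; the
idempotents then coincide with those of the generalized eigenspaces of `γ`, which are polynomials
in `γ`, and hence so is `β = ∑ b • f a * e b`. Faithful flatness of `K` over `k` descends
`β ∈ K[γ]` to `β ∈ k[γ]`, and since `k` is infinite such a `c ≠ 0` can be taken in `k`. Induction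
then adjoins the separable `δ i` one at a time to the (at most one) inseparable one.
-/

open Polynomial TensorProduct

theorem pow_mul_eq_pow_mul_of_mul_eq_mul {R : Type*} [CommMonoid R] {u w e : R}
    (h : u * e = w * e) (m : ℕ) : u ^ m * e = w ^ m * e := by
  induction m with
  | zero => simp
  | succ m ih => rw [pow_succ, mul_assoc, h, mul_left_comm, ih, ← mul_assoc, ← pow_succ']

theorem eq_of_sum_eq_one_of_mul_eq_zero {R ι : Type*} [CommSemiring R] {P : Finset ι}
    {E F : ι → R} (hE : ∑ p ∈ P, E p = 1) (hF : ∑ p ∈ P, F p = 1)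
    (h : ∀ p ∈ P, ∀ q ∈ P, p ≠ q → E p * F q = 0) {p : ι} (hp : p ∈ P) : E p = F p :=
  calc E p = ∑ q ∈ P, E p * F q := by rw [← Finset.mul_sum, hF, mul_one]
    _ = E p * F p := Finset.sum_eq_single_of_mem p hp fun q hq hqp ↦ h p hp q hq hqp.symm
    _ = ∑ q ∈ P, E q * F p := (Finset.sum_eq_single_of_mem p hp fun q hq hqp ↦ h q hq p hp hqp).symm
    _ = F p := by rw [← Finset.sum_mul, hE, one_mul]

section Decomposition

variable {K A : Type*} [Field K] [CommRing A] [Algebra K A]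

theorem exists_sum_eq_one_of_aeval_prod_eq_zero {x : A} {S : Finset K} {M : ℕ}
    (hx : aeval x (∏ s ∈ S, (X - C s) ^ M) = 0) :
    ∃ E : K → A, ∑ s ∈ S, E s = 1 ∧
      ∀ s ∈ S, (x - algebraMap K A s) ^ M * E s = 0 ∧ E s ∈ Algebra.adjoin K {x} := by
  classical
  rcases S.eq_empty_or_nonempty with rfl | hS
  · refine ⟨0, ?_, by simp⟩
    rw [Finset.prod_empty, map_one] at hx
    rw [Finset.sum_empty, hx]
  have hcop : Pairwise (Function.onFun IsCoprime fun s : S ↦ (X - C (s : K)) ^ M) := fun s t hst ↦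
    (isCoprime_X_sub_C_of_isUnit_sub (sub_ne_zero.2 (Subtype.coe_ne_coe.2 hst)).isUnit).pow
  obtain ⟨μ, hμ⟩ :=
    (exists_sum_eq_one_iff_pairwise_coprime (s := fun s : K ↦ (X - C s) ^ M) hS).2 hcop
  refine ⟨fun s ↦ aeval x (μ s * ∏ t ∈ S \ {s}, (X - C t) ^ M), ?_, fun s hs ↦ ⟨?_, ?_⟩⟩
  · rw [← map_sum, hμ, map_one]
  · have : (X - C s) ^ M * (μ s * ∏ t ∈ S \ {s}, (X - C t) ^ M) =
        μ s * ∏ t ∈ S, (X - C t) ^ M := by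
      rw [Finset.sdiff_singleton_eq_erase, mul_left_comm,
        Finset.mul_prod_erase S (fun t ↦ (X - C t) ^ M) hs]
    calc (x - algebraMap K A s) ^ M * aeval x (μ s * ∏ t ∈ S \ {s}, (X - C t) ^ M)
        = aeval x ((X - C s) ^ M * (μ s * ∏ t ∈ S \ {s}, (X - C t) ^ M)) := by simp
      _ = 0 := by rw [this, map_mul, hx, mul_zero]
  · exact aeval_mem_adjoin_singleton K x

theorem aeval_prod_eq_zero_of_sum_eq_one {ι : Type*} [DecidableEq K] {x : A} {P : Finset ι}
    {E : ι → A} {lam : ι → K} {M : ℕ} (hE : ∑ p ∈ P, E p = 1)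
    (hx : ∀ p ∈ P, (x - algebraMap K A (lam p)) ^ M * E p = 0) :
    aeval x (∏ s ∈ P.image lam, (X - C s) ^ M) = 0 := by
  rw [← mul_one (aeval x _), ← hE, Finset.mul_sum]
  refine Finset.sum_eq_zero fun p hp ↦ ?_
  obtain ⟨q, hq⟩ := Finset.dvd_prod_of_mem (fun s ↦ (X - C s) ^ M) (Finset.mem_image_of_mem lam hp)
  rw [hq, map_mul, mul_right_comm, map_pow, map_sub, aeval_X, aeval_C, hx p hp, zero_mul]

theorem mul_eq_zero_of_pow_sub_mul_eq_zero {x e e' : A} {a b : K} {M N : ℕ} (hab : a ≠ b)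
    (he : (x - algebraMap K A a) ^ M * e = 0) (he' : (x - algebraMap K A b) ^ N * e' = 0) :
    e * e' = 0 := by
  obtain ⟨u, v, huv⟩ :=
    (isCoprime_X_sub_C_of_isUnit_sub (sub_ne_zero.2 hab).isUnit).pow (m := M) (n := N)
  have h1 := congrArg (aeval x) huv
  simp only [map_add, map_mul, map_pow, map_sub, aeval_X, aeval_C, map_one] at h1
  linear_combination -(e * e') * h1 + aeval x u * e' * he + aeval x v * e * he'

theorem mem_adjoin_add_smul_of_injOn {α β : A} {Sa Sb : Finset K} {M : ℕ}
    (hα : aeval α (∏ a ∈ Sa, (X - C a) ^ M) = 0) (hβ : aeval β (∏ b ∈ Sb, (X - C b)) = 0)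
    {c : K} (hc : Set.InjOn (fun p : K × K ↦ p.1 + c * p.2) ↑(Sa ×ˢ Sb)) :
    β ∈ Algebra.adjoin K {α + c • β} := by
  classical
  obtain ⟨f, hf1, hf⟩ := exists_sum_eq_one_of_aeval_prod_eq_zero hα
  obtain ⟨e, he1, he⟩ := exists_sum_eq_one_of_aeval_prod_eq_zero (x := β) (S := Sb) (M := 1)
    (by simpa only [pow_one] using hβ)
  set γ := α + c • β
  set P := Sa ×ˢ Sb
  set lam : K × K → K := fun p ↦ p.1 + c * p.2
  set E : K × K → A := fun p ↦ f p.1 * e p.2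
  have hE1 : ∑ p ∈ P, E p = 1 := by
    rw [Finset.sum_product, ← Finset.sum_mul_sum (f := f) (g := e), hf1, he1, one_mul]
  have hβE : ∀ p ∈ P, β * e p.2 = algebraMap K A p.2 * e p.2 := fun p hp ↦
    sub_eq_zero.1 <| by simpa [sub_mul] using (he p.2 (Finset.mem_product.1 hp).2).1
  have hγE : ∀ p ∈ P, (γ - algebraMap K A (lam p)) ^ M * E p = 0 := by
    intro p hp
    have hγe : (γ - algebraMap K A (lam p)) * e p.2 = (α - algebraMap K A p.1) * e p.2 := by
      simp only [γ, lam, map_add, map_mul, Algebra.smul_def]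
      linear_combination algebraMap K A c * hβE p hp
    calc (γ - algebraMap K A (lam p)) ^ M * E p
        = f p.1 * ((γ - algebraMap K A (lam p)) ^ M * e p.2) := by ring
      _ = ((α - algebraMap K A p.1) ^ M * f p.1) * e p.2 := by
        rw [pow_mul_eq_pow_mul_of_mul_eq_mul hγe]; ring
      _ = 0 := by rw [(hf p.1 (Finset.mem_product.1 hp).1).1, zero_mul]
  obtain ⟨F, hF1, hF⟩ :=
    exists_sum_eq_one_of_aeval_prod_eq_zero (aeval_prod_eq_zero_of_sum_eq_one hE1 hγE)
  have hEF : ∀ p ∈ P, E p = F (lam p) :=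
    fun p hp ↦ eq_of_sum_eq_one_of_mul_eq_zero hE1 (by rwa [← Finset.sum_image hc])
      (fun p hp q hq hpq ↦ mul_eq_zero_of_pow_sub_mul_eq_zero (hc.ne hp hq hpq) (hγE p hp)
        (hF _ (Finset.mem_image_of_mem lam hq)).1) hp
  have hβ_eq : β = ∑ p ∈ P, algebraMap K A p.2 * E p := by
    calc β = ∑ p ∈ P, β * E p := by rw [← Finset.mul_sum, hE1, mul_one]
      _ = _ := Finset.sum_congr rfl fun p hp ↦ by
        simp only [E]; rw [mul_left_comm, hβE p hp, mul_left_comm]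
  rw [hβ_eq]
  exact Subalgebra.sum_mem _ fun p hp ↦ Subalgebra.mul_mem _ (Subalgebra.algebraMap_mem _ _)
    (hEF p hp ▸ (hF _ (Finset.mem_image_of_mem lam hp)).2)

end Decomposition

theorem finite_setOf_not_injOn_add_mul {K : Type*} [Field K] {s : Set (K × K)} (hs : s.Finite) :
    {c : K | ¬ Set.InjOn (fun p ↦ p.1 + c * p.2) s}.Finite := by
  refine ((hs.prod hs).image fun z ↦ (z.2.1 - z.1.1) / (z.1.2 - z.2.2)).subset fun c hc ↦ ?_
  obtain ⟨p, hp, q, hq, hpq, hne⟩ : ∃ p ∈ s, ∃ q ∈ s, p.1 + c * p.2 = q.1 + c * q.2 ∧ p ≠ q := by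
    simpa [Set.InjOn] using hc
  have h2 : p.2 ≠ q.2 := fun h ↦ hne (Prod.ext (by linear_combination hpq - c * h) h)
  refine ⟨(p, q), ⟨hp, hq⟩, ?_⟩
  rw [div_eq_iff (sub_ne_zero.2 h2)]
  linear_combination -hpq

section AlgClosed

variable {K A : Type*} [Field K] [IsAlgClosed K] [DecidableEq K] [CommRing A] [Algebra K A]

theorem aeval_prod_roots_minpoly_pow_eq_zero {x : A} (hx : IsIntegral K x) {d : ℕ}
    (hd : ∀ s, (minpoly K x).roots.count s ≤ d) :
    aeval x (∏ s ∈ (minpoly K x).roots.toFinset, (X - C s) ^ d) = 0 := by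
  refine aeval_eq_zero_of_dvd_aeval_eq_zero ?_ (minpoly.aeval K x)
  conv_lhs => rw [(IsAlgClosed.splits (minpoly K x)).eq_prod_roots_of_monic (minpoly.monic hx)]
  rw [Finset.prod_multiset_map_count]
  exact Finset.prod_dvd_prod_of_dvd _ _ fun s _ ↦ pow_dvd_pow _ (hd s)

theorem aeval_prod_roots_minpoly_pow_natDegree_eq_zero {x : A} (hx : IsIntegral K x) :
    aeval x (∏ s ∈ (minpoly K x).roots.toFinset, (X - C s) ^ (minpoly K x).natDegree) = 0 :=
  aeval_prod_roots_minpoly_pow_eq_zero hx fun s ↦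
    (Multiset.count_le_card s _).trans (card_roots' _)

theorem aeval_prod_roots_minpoly_eq_zero {x : A} (hx : (minpoly K x).Separable) :
    aeval x (∏ s ∈ (minpoly K x).roots.toFinset, (X - C s)) = 0 := by
  simpa only [pow_one] using aeval_prod_roots_minpoly_pow_eq_zero (d := 1)
    (minpoly.ne_zero_iff.1 hx.ne_zero) (Multiset.nodup_iff_count_le_one.1 (nodup_roots hx))

end AlgClosed

theorem Submodule.mem_of_one_tmul_mem_baseChange {R M A : Type*} [CommRing R] [Ring A]
    [Algebra R A] [Module.FaithfullyFlat R A] [AddCommGroup M] [Module R M] {p : Submodule R M}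
    {x : M} (hx : (1 : A) ⊗ₜ[R] x ∈ p.baseChange A) : x ∈ p := by
  have : (span R {x}).baseChange A ≤ p.baseChange A := by
    rwa [baseChange_span, Set.image_singleton, span_le, Set.singleton_subset_iff]
  exact baseChange_le_iff.1 this (subset_span rfl)

theorem Subalgebra.mem_of_one_tmul_mem_baseChange {R B A : Type*} [CommRing R] [CommRing A]
    [Algebra R A] [Module.FaithfullyFlat R A] [Ring B] [Algebra R B] {C : Subalgebra R B} {x : B}
    (hx : (1 : A) ⊗ₜ[R] x ∈ C.baseChange A) : x ∈ C :=
  Submodule.mem_of_one_tmul_mem_baseChange (p := Subalgebra.toSubmodule C) hx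

section PrimitiveElement

variable {k Δ : Type*} [Field k] [CommRing Δ] [Algebra k Δ]

theorem adjoin_add_smul_eq_adjoin_pair {α β : Δ} {c : k} (hβ : β ∈ Algebra.adjoin k {α + c • β}) :
    Algebra.adjoin k {α + c • β} = Algebra.adjoin k {α, β} := by
  have hα : α ∈ Algebra.adjoin k {α + c • β} := by
    simpa using sub_mem (Algebra.self_mem_adjoin_singleton k (α + c • β))
      (Subalgebra.smul_mem _ hβ c)
  refine le_antisymm (Algebra.adjoin_le ?_) (Algebra.adjoin_le ?_)
  · rw [Set.singleton_subset_iff]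
    have hα' : α ∈ Algebra.adjoin k {α, β} := Algebra.subset_adjoin (Set.mem_insert α {β})
    have hβ' : β ∈ Algebra.adjoin k {α, β} :=
      Algebra.subset_adjoin (Set.mem_insert_of_mem α (Set.mem_singleton β))
    exact add_mem hα' (Subalgebra.smul_mem _ hβ' c)
  · exact Set.insert_subset hα (Set.singleton_subset_iff.2 hβ)

theorem exists_adjoin_add_smul_eq_adjoin_pair [Infinite k] {α β : Δ} (hα : IsIntegral k α)
    (hβ : (minpoly k β).Separable) :
    ∃ c : k, c ≠ 0 ∧ Algebra.adjoin k {α + c • β} = Algebra.adjoin k {α, β} := by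
  classical
  let K := AlgebraicClosure k
  let ι : Δ →ₐ[k] (K ⊗[k] Δ) := Algebra.TensorProduct.includeRight
  have hα' : IsIntegral K (ι α) := (hα.map ι).tower_top
  have hβ' : (minpoly K (ι β)).Separable := (hβ.map (f := algebraMap k K)).of_dvd <|
    minpoly.dvd K (ι β) (by
      rw [aeval_map_algebraMap, aeval_algHom_apply, minpoly.aeval, map_zero])
  set Sa := (minpoly K (ι α)).roots.toFinset
  set Sb := (minpoly K (ι β)).roots.toFinset
  have hbad := ((finite_setOf_not_injOn_add_mul (Sa ×ˢ Sb).finite_toSet).preimage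
    (algebraMap k K).injective.injOn).union (Set.finite_singleton 0)
  obtain ⟨c, hc⟩ := hbad.infinite_compl.nonempty
  simp only [Set.mem_compl_iff, Set.mem_union, Set.mem_preimage, Set.mem_ofPred_eq,
    Set.mem_singleton_iff, not_or, not_not] at hc
  have hιβ : ι β ∈ Algebra.adjoin K {ι (α + c • β)} := by
    rw [map_add, map_smul, ← algebraMap_smul K]
    exact mem_adjoin_add_smul_of_injOn (aeval_prod_roots_minpoly_pow_natDegree_eq_zero hα')
      (aeval_prod_roots_minpoly_eq_zero hβ') hc.1
  have hle : Algebra.adjoin K {ι (α + c • β)} ≤ (Algebra.adjoin k {α + c • β}).baseChange K :=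
    Algebra.adjoin_le <| Set.singleton_subset_iff.2 <|
      Subalgebra.tmul_mem_baseChange (Algebra.self_mem_adjoin_singleton k _) 1
  exact ⟨c, hc.2, adjoin_add_smul_eq_adjoin_pair
    (Subalgebra.mem_of_one_tmul_mem_baseChange (hle hιβ))⟩

theorem exists_adjoin_add_sum_smul_eq [Infinite k] [Algebra.IsIntegral k Δ] {ι : Type*}
    (α : Δ) (δ : ι → Δ) (t : Finset ι) (ht : ∀ i ∈ t, (minpoly k (δ i)).Separable) :
    ∃ c : ι → k, (∀ i, c i ≠ 0) ∧
      Algebra.adjoin k {α + ∑ i ∈ t, c i • δ i} = Algebra.adjoin k (insert α (δ '' t)) := by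
  classical
  induction t using Finset.induction_on with
  | empty => exact ⟨1, fun _ ↦ one_ne_zero, by simp⟩
  | insert j t hj ih =>
    obtain ⟨c, hc0, hc⟩ := ih fun i hi ↦ ht i (Finset.mem_insert_of_mem hi)
    obtain ⟨a, ha0, ha⟩ := exists_adjoin_add_smul_eq_adjoin_pair
      (Algebra.IsIntegral.isIntegral (α + ∑ i ∈ t, c i • δ i)) (ht j (Finset.mem_insert_self j t))
    refine ⟨Function.update c j a, fun i ↦ ?_, ?_⟩
    · rcases eq_or_ne i j with rfl | hij
      · simpa using ha0
      · simpa [hij] using hc0 i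
    · have hsum : α + ∑ i ∈ insert j t, Function.update c j a i • δ i =
          α + ∑ i ∈ t, c i • δ i + a • δ j := by
        rw [Finset.sum_insert hj, Function.update_self,
          Finset.sum_congr rfl fun i hi ↦ by
            rw [Function.update_of_ne (ne_of_mem_of_not_mem hi hj)]]
        abel
      rw [hsum, ha, Set.pair_comm, ← Algebra.adjoin_insert_adjoin, hc, Algebra.adjoin_insert_adjoin,
        Finset.coe_insert, Set.image_insert_eq, Set.insert_comm]

theorem exists_adjoin_sum_smul_eq_adjoin_range [Infinite k] [Algebra.IsIntegral k Δ]
    {ι : Type*} [Fintype ι] [Nonempty ι] (δ : ι → Δ)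
    (hsep : {i | ¬ (minpoly k (δ i)).Separable}.Subsingleton) :
    ∃ c : ι → k, (∀ i, c i ≠ 0) ∧
      Algebra.adjoin k {∑ i, c i • δ i} = Algebra.adjoin k (Set.range δ) := by
  classical
  obtain ⟨i₀, hi₀⟩ : ∃ i₀, ∀ i ≠ i₀, (minpoly k (δ i)).Separable := by
    rcases hsep.eq_empty_or_singleton with h | ⟨i₀, h⟩
    · exact ⟨Classical.arbitrary ι, fun i _ ↦ by_contra fun hi ↦ h.subset hi⟩
    · exact ⟨i₀, fun i hi ↦ by_contra fun hi' ↦ hi (h.subset hi')⟩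
  obtain ⟨c, hc0, hc⟩ := exists_adjoin_add_sum_smul_eq (δ i₀) δ (Finset.univ.erase i₀)
    fun i hi ↦ hi₀ i (Finset.ne_of_mem_erase hi)
  refine ⟨Function.update c i₀ 1, fun i ↦ ?_, ?_⟩
  · rcases eq_or_ne i i₀ with rfl | hi
    · simp
    · simpa [hi] using hc0 i
  · rw [← Finset.add_sum_erase _ _ (Finset.mem_univ i₀), Function.update_self, one_smul,
      Finset.sum_congr rfl fun i hi ↦ by
        rw [Function.update_of_ne (Finset.ne_of_mem_erase hi)], hc,
      Finset.coe_erase, Finset.coe_univ, ← Set.image_insert_eq, Set.insert_sdiff_singleton,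
      Set.insert_eq_of_mem (Set.mem_univ _), Set.image_univ]

theorem adjoin_singleton_smul_of_ne_zero {a : k} (ha : a ≠ 0) (x : Δ) :
    Algebra.adjoin k {a • x} = Algebra.adjoin k {x} := by
  refine le_antisymm (Algebra.adjoin_le ?_) (Algebra.adjoin_le ?_) <;>
    rw [Set.singleton_subset_iff]
  · exact Subalgebra.smul_mem _ (Algebra.self_mem_adjoin_singleton k x) a
  · simpa [smul_smul, ha] using
      Subalgebra.smul_mem _ (Algebra.self_mem_adjoin_singleton k (a • x)) a⁻¹

end PrimitiveElement

theorem stmt_10 (k Δ : Type*) [Field k] [CharZero k] [CommRing Δ] [Algebra k Δ]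
    [FiniteDimensional k Δ] (n : ℕ) (hn : 0 < n) (δ : Fin n → Δ)
    (hsep : {i | ¬ (minpoly k (δ i)).Separable}.Subsingleton) :
    ∃ c : Fin n → k, c ⟨0, hn⟩ = 1 ∧ (∀ i, c i ≠ 0) ∧
      Algebra.adjoin k {∑ i, c i • δ i} = Algebra.adjoin k (Set.range δ) := by
  have : Nonempty (Fin n) := ⟨⟨0, hn⟩⟩
  obtain ⟨c, hc0, hc⟩ := exists_adjoin_sum_smul_eq_adjoin_range δ hsep
  set a := c ⟨0, hn⟩
  have ha : a ≠ 0 := hc0 _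
  refine ⟨fun i ↦ a⁻¹ * c i, inv_mul_cancel₀ ha, fun i ↦ mul_ne_zero (inv_ne_zero ha) (hc0 i), ?_⟩
  simp_rw [mul_smul, ← Finset.smul_sum]
  rw [adjoin_singleton_smul_of_ne_zero (inv_ne_zero ha), hc]
end

section
/- Let k be a field of characteristic zero and Δ a finite-dimensional commutative k-algebra. If δ_1, δ_2 ∈ Δ have minimal polynomials μ_{δ_1}, μ_{δ_2} that are both inseparable, and deg μ_{δ_1} · deg μ_{δ_2} = dim_k k[δ_1, δ_2], then the subalgebra k[δ_1, δ_2] is not generated by a single element over k. -/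
/-!
The dimension hypothesis makes `k[δ₁, δ₂]` a copy of `k[X]/(μ₁) ⊗ k[X]/(μ₂)`. A repeated
root `α` of `μ₁` in an algebraic closure `K` lets `δ₁ ↦ α + ε₁` define a map into a
square-zero extension, and likewise `δ₂ ↦ β + ε₂`, so the tensor product has a
two-dimensional tangent space at `(α, β)`.
An algebra generated by one element `b` has tangent spaces of dimension at most one, because the
first-order part of `p(b)` is `p'(b₀)` times that of `b`.
-/

open Polynomial TrivSqZeroExt TensorProduct

section SquareZero

variable {k K M : Type*} [CommRing k] [Field K] [Algebra k K] [AddCommGroup M] [Module K M]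
  [Module Kᵐᵒᵖ M] [IsCentralScalar K M] [Module k M] [IsScalarTower k K M]
  [IsScalarTower k Kᵐᵒᵖ M]

theorem TrivSqZeroExt.aeval_inl_add_inr (p : k[X]) (a : K) (m : M) :
    aeval (inl a + inr m : TrivSqZeroExt K M) p =
      inl (aeval a p) + inr (aeval a (derivative p) • m) := by
  rw [aeval_add_of_sq_eq_zero _ _ _ (by rw [sq, inr_mul_inr]), ← algebraMap_eq_inl,
    aeval_algebraMap_apply, aeval_algebraMap_apply, algebraMap_eq_inl, inl_mul_inr]

variable {A : Type*} [CommRing A] [Algebra k A]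

theorem TrivSqZeroExt.snd_apply_mem_span_of_mem_adjoin_singleton
    (f : A →ₐ[k] TrivSqZeroExt K M) {b x : A} (hx : x ∈ Algebra.adjoin k {b}) :
    (f x).snd ∈ K ∙ (f b).snd := by
  rw [Algebra.adjoin_singleton_eq_range_aeval] at hx
  obtain ⟨p, rfl⟩ := hx
  have h := aeval_inl_add_inr p (f b).fst (f b).snd
  rw [inl_fst_add_inr_snd_eq, aeval_algHom_apply] at h
  rw [AlgHom.toRingHom_eq_coe, RingHom.coe_coe, h, snd_add, snd_inl, snd_inr, zero_add]
  exact Submodule.smul_mem _ _ (Submodule.mem_span_singleton_self _)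

end SquareZero

theorem Polynomial.exists_aeval_eq_zero_derivative_of_not_separable {k : Type*} [Field k]
    (K : Type*) [Field K] [IsAlgClosed K] [Algebra k K] {p : k[X]} (hp : ¬ p.Separable) :
    ∃ a : K, aeval a p = 0 ∧ aeval a (derivative p) = 0 := by
  by_contra! h
  exact hp <| (isCoprime_iff_aeval_ne_zero_of_isAlgClosed k K _ _).2 fun a =>
    imp_iff_not_or.1 (h a)

theorem Prod.not_one_zero_mem_and_zero_one_mem_span_singleton {K : Type*} [Field K] (v : K × K) :
    ¬ ((1, 0) ∈ K ∙ v ∧ (0, 1) ∈ K ∙ v) := by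
  rintro ⟨h₁, h₂⟩
  obtain ⟨a, ha⟩ := Submodule.mem_span_singleton.1 h₁
  obtain ⟨c, hc⟩ := Submodule.mem_span_singleton.1 h₂
  simp only [Prod.ext_iff, Prod.smul_fst, Prod.smul_snd, smul_eq_mul] at ha hc
  exact one_ne_zero (α := K) <| by
    linear_combination (-(c * v.2)) * ha.1 - hc.2 + (c * v.1) * ha.2

theorem AdjoinRoot.adjoin_singleton_tensorProduct_ne_top {k : Type*} [Field k] {p q : k[X]}
    (hp : ¬ p.Separable) (hq : ¬ q.Separable) (b : AdjoinRoot p ⊗[k] AdjoinRoot q) :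
    Algebra.adjoin k {b} ≠ ⊤ := by
  intro hb
  let K := AlgebraicClosure k
  obtain ⟨α, hα, hα'⟩ := exists_aeval_eq_zero_derivative_of_not_separable K hp
  obtain ⟨β, hβ, hβ'⟩ := exists_aeval_eq_zero_derivative_of_not_separable K hq
  have hroot {r : k[X]} {a : K} (h : aeval a r = 0) (h' : aeval a (derivative r) = 0)
      (m : K × K) : r.eval₂ (Algebra.ofId k (TrivSqZeroExt K (K × K))) (inl a + inr m) = 0 := by
    rw [Algebra.toRingHom_ofId, ← aeval_def, aeval_inl_add_inr, h, h', zero_smul, inl_zero,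
      inr_zero, add_zero]
  -- The point `(α, β)` deformed to first order in both coordinate directions.
  let f : AdjoinRoot p ⊗[k] AdjoinRoot q →ₐ[k] TrivSqZeroExt K (K × K) :=
    Algebra.TensorProduct.productMap
      (liftAlgHom p (Algebra.ofId k _) (inl α + inr (1, 0)) (hroot hα hα' _))
      (liftAlgHom q (Algebra.ofId k _) (inl β + inr (0, 1)) (hroot hβ hβ' _))
  have hmem (x : AdjoinRoot p ⊗[k] AdjoinRoot q) : x ∈ Algebra.adjoin k {b} :=
    hb ▸ Algebra.mem_top
  have h₁ := snd_apply_mem_span_of_mem_adjoin_singleton f (hmem (root p ⊗ₜ 1))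
  have h₂ := snd_apply_mem_span_of_mem_adjoin_singleton f (hmem (1 ⊗ₜ root q))
  simp only [f, Algebra.TensorProduct.productMap_apply_tmul, liftAlgHom_root,
    map_one, mul_one, one_mul, snd_add, snd_inl, snd_inr, zero_add] at h₁ h₂
  exact Prod.not_one_zero_mem_and_zero_one_mem_span_singleton _ ⟨h₁, h₂⟩

section Presentation

variable {R A B : Type*} [CommRing R] [CommRing A] [Algebra R A] [CommRing B] [Algebra R B]

theorem AdjoinRoot.range_liftAlgHom (p : R[X]) (x : A) (h : p.eval₂ (Algebra.ofId R A) x = 0) :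
    (liftAlgHom p (Algebra.ofId R A) x h).range = Algebra.adjoin R {x} := by
  rw [← Algebra.map_top, ← adjoinRoot_eq_top, AlgHom.map_adjoin_singleton, liftAlgHom_root]

theorem AdjoinRoot.range_productMap_liftAlgHom (p q : R[X]) (x y : A)
    (hx : p.eval₂ (Algebra.ofId R A) x = 0) (hy : q.eval₂ (Algebra.ofId R A) y = 0) :
    (Algebra.TensorProduct.productMap (liftAlgHom p (Algebra.ofId R A) x hx)
      (liftAlgHom q (Algebra.ofId R A) y hy)).range = Algebra.adjoin R {x, y} := by
  rw [Algebra.TensorProduct.productMap_range, range_liftAlgHom, range_liftAlgHom,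
    ← Algebra.adjoin_union, Set.singleton_union]

theorem Algebra.adjoin_singleton_eq_top_of_injective {f : B →ₐ[R] A} (hf : Function.Injective f)
    {x : B} (h : f.range = Algebra.adjoin R {f x}) : Algebra.adjoin R {x} = ⊤ :=
  Subalgebra.map_injective hf <| by rw [AlgHom.map_adjoin_singleton, Algebra.map_top, h]

end Presentation

theorem AlgHom.injective_of_finrank_range_eq {k A B : Type*} [Field k] [CommRing A] [Algebra k A]
    [CommRing B] [Algebra k B] [FiniteDimensional k B] (f : B →ₐ[k] A)
    (h : Module.finrank k B = Module.finrank k f.range) : Function.Injective f := by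
  have := Module.Finite.of_surjective f.rangeRestrict.toLinearMap f.rangeRestrict_surjective
  have hinj := (LinearMap.injective_iff_surjective_of_finrank_eq_finrank h
    (f := f.rangeRestrict.toLinearMap)).2 f.rangeRestrict_surjective
  exact fun x y hxy => hinj (Subtype.ext hxy)

theorem stmt_11_general (k Δ : Type*) [Field k] [CommRing Δ] [Algebra k Δ]
    [FiniteDimensional k Δ] (δ₁ δ₂ : Δ)
    (h₁ : ¬ (minpoly k δ₁).Separable) (h₂ : ¬ (minpoly k δ₂).Separable)
    (hdim : (minpoly k δ₁).natDegree * (minpoly k δ₂).natDegree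
      = Module.finrank k ↥(Algebra.adjoin k {δ₁, δ₂})) :
    ¬ ∃ g : Δ, Algebra.adjoin k {g} = Algebra.adjoin k {δ₁, δ₂} := by
  rintro ⟨g, hg⟩
  have hne (δ : Δ) : minpoly k δ ≠ 0 := minpoly.ne_zero (Algebra.IsIntegral.isIntegral δ)
  let pb₁ := AdjoinRoot.powerBasis (hne δ₁)
  let pb₂ := AdjoinRoot.powerBasis (hne δ₂)
  have := pb₁.finite
  have := pb₂.finite
  let θ := Algebra.TensorProduct.productMap
    (AdjoinRoot.liftAlgHom _ (Algebra.ofId k Δ) δ₁ (minpoly.aeval k δ₁))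
    (AdjoinRoot.liftAlgHom _ (Algebra.ofId k Δ) δ₂ (minpoly.aeval k δ₂))
  have hrange : θ.range = Algebra.adjoin k {δ₁, δ₂} :=
    AdjoinRoot.range_productMap_liftAlgHom _ _ _ _ _ _
  have hinj : Function.Injective θ := θ.injective_of_finrank_range_eq <| by
    rw [hrange, ← hdim, Module.finrank_tensorProduct, pb₁.finrank, pb₂.finrank,
      AdjoinRoot.powerBasis_dim, AdjoinRoot.powerBasis_dim]
  obtain ⟨x, rfl⟩ : g ∈ θ.range := hrange ▸ hg ▸ Algebra.self_mem_adjoin_singleton k g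
  exact AdjoinRoot.adjoin_singleton_tensorProduct_ne_top h₁ h₂ x
    (Algebra.adjoin_singleton_eq_top_of_injective hinj (hrange.trans hg.symm))

theorem stmt_11 (k Δ : Type*) [Field k] [CharZero k] [CommRing Δ] [Algebra k Δ]
    [FiniteDimensional k Δ] (δ₁ δ₂ : Δ)
    (h₁ : ¬ (minpoly k δ₁).Separable) (h₂ : ¬ (minpoly k δ₂).Separable)
    (hdim : (minpoly k δ₁).natDegree * (minpoly k δ₂).natDegree
      = Module.finrank k ↥(Algebra.adjoin k {δ₁, δ₂})) :
    ¬ ∃ g : Δ, Algebra.adjoin k {g} = Algebra.adjoin k {δ₁, δ₂} :=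
  stmt_11_general k Δ δ₁ δ₂ h₁ h₂ hdim
end

section
/- Let k be a field of characteristic zero and let A_1,...,A_m (m ≥ 2) be pairwise commuting n×n matrices over k. If at most one of the matrices A_1,...,A_m fails to be diagonalizable (over the algebraic closure of k), then there exists an n×n matrix C over k such that each A_i is a polynomial in C with coefficients in k. -/
/-!
Write the exceptional matrix as `N + S` with `N` nilpotent and `S` semisimple, both polynomials
in it (Jordan–Chevalley). The semisimple matrices `S` and `Aᵢ` (`i ≠ j₀`) commute, so they
generate a reduced commutative finite-dimensional algebra, i.e. a finite product of finite
separable field extensions of `k`. Such an algebra has a single generator `γ`: each factor has a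
primitive element, and since `k` is infinite the generators of two factors can be shifted by
constants until their minimal polynomials are coprime, when the Chinese remainder theorem glues
them. Finally `N` and `γ` commute, so by uniqueness they are the Jordan–Chevalley parts of
`C = N + γ`, hence polynomials in `C`, and so is every `Aᵢ`.
-/

open Polynomial

def IsMonogenic (k R : Type*) [CommSemiring k] [Semiring R] [Algebra k R] : Prop :=
  ∃ x : R, Function.Surjective (aeval (R := k) x)

theorem exists_isCoprime_comp_X_sub_C {k : Type*} [Field k] [Infinite k] {p q : k[X]}
    (hp : p ≠ 0) (hq : q ≠ 0) : ∃ c : k, IsCoprime (p.comp (X - C c)) q := by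
  classical
  let K := AlgebraicClosure k
  let bad : Finset K := Finset.image₂ (· - ·) (q.aroots K).toFinset (p.aroots K).toFinset
  have hfin : (algebraMap k K ⁻¹' bad).Finite :=
    bad.finite_toSet.preimage (algebraMap k K).injective.injOn
  obtain ⟨c, hc⟩ := hfin.infinite_compl.nonempty
  refine ⟨c, (isCoprime_iff_aeval_ne_zero_of_isAlgClosed k K _ _).mpr fun a => ?_⟩
  by_contra! h
  refine hc (Finset.mem_image₂.mpr ⟨a, ?_, a - algebraMap k K c, ?_, sub_sub_cancel _ _⟩)
  · simpa [hq] using h.2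
  · simpa [hp, aeval_comp] using h.1

theorem surjective_aeval_prod_of_isCoprime {k A B : Type*} [CommRing k] [CommRing A] [CommRing B]
    [Algebra k A] [Algebra k B] {x : A} {y : B} (hx : Function.Surjective (aeval (R := k) x))
    (hy : Function.Surjective (aeval (R := k) y)) {p q : k[X]} (hp : aeval x p = 0)
    (hq : aeval y q = 0) (hpq : IsCoprime p q) : Function.Surjective (aeval (R := k) (x, y)) := by
  have aeval_pair (r : k[X]) : aeval (x, y) r = (aeval x r, aeval y r) :=
    Prod.ext (aeval_algHom_apply (AlgHom.fst k A B) _ r).symm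
      (aeval_algHom_apply (AlgHom.snd k A B) _ r).symm
  obtain ⟨u, v, huv⟩ := hpq
  have hvq : aeval x (v * q) = 1 := by
    simpa [hp] using congrArg (aeval x) huv
  have hup : aeval y (u * p) = 1 := by
    simpa [hq] using congrArg (aeval y) huv
  -- at `(x, y)`, `v * q` evaluates to `(1, 0)` and `u * p` to `(0, 1)`
  rintro ⟨a, b⟩
  obtain ⟨r, rfl⟩ := hx a
  obtain ⟨s, rfl⟩ := hy b
  refine ⟨v * q * r + u * p * s, ?_⟩
  rw [aeval_pair]
  simp only [map_add, map_mul] at hvq hup ⊢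
  simp [hp, hq, hvq, hup]

namespace IsMonogenic

variable {k : Type*}

theorem of_surjective [CommSemiring k] {A B : Type*} [Semiring A] [Semiring B] [Algebra k A]
    [Algebra k B] (f : A →ₐ[k] B) (hf : Function.Surjective f) (hA : IsMonogenic k A) :
    IsMonogenic k B := by
  obtain ⟨x, hx⟩ := hA
  exact ⟨f x, by rw [aeval_algHom]; exact hf.comp hx⟩

theorem of_subsingleton [CommSemiring k] (R : Type*) [Semiring R] [Algebra k R] [Subsingleton R] :
    IsMonogenic k R :=
  ⟨0, fun _ => ⟨0, Subsingleton.elim _ _⟩⟩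

variable [Field k]

theorem of_field (K : Type*) [Field K] [Algebra k K] [FiniteDimensional k K]
    [Algebra.IsSeparable k K] : IsMonogenic k K := by
  obtain ⟨x, hx⟩ := Field.exists_primitive_element k K
  refine ⟨x, ?_⟩
  rw [← AlgHom.range_eq_top, ← Algebra.adjoin_singleton_eq_range_aeval]
  exact Algebra.adjoin_eq_top_of_primitive_element (Algebra.IsAlgebraic.isAlgebraic x) hx

theorem prod [Infinite k] {A B : Type*} [CommRing A] [CommRing B] [Algebra k A] [Algebra k B]
    [Module.Finite k A] [Module.Finite k B] (hA : IsMonogenic k A) (hB : IsMonogenic k B) :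
    IsMonogenic k (A × B) := by
  obtain ⟨x, hx⟩ := hA
  obtain ⟨y, hy⟩ := hB
  obtain ⟨c, hc⟩ := exists_isCoprime_comp_X_sub_C (minpoly.ne_zero_of_finite k x)
    (minpoly.ne_zero_of_finite k y)
  have aeval_shift (r : k[X]) : aeval (x + algebraMap k A c) (r.comp (X - C c)) = aeval x r := by
    simp [aeval_comp]
  refine ⟨(x + algebraMap k A c, y), surjective_aeval_prod_of_isCoprime ?_ hy ?_
    (minpoly.aeval k y) hc⟩
  · intro a
    obtain ⟨r, rfl⟩ := hx a
    exact ⟨_, aeval_shift r⟩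
  · rw [aeval_shift, minpoly.aeval]

theorem pi [Infinite k] {ι : Type*} [Finite ι] {K : ι → Type*} [∀ i, CommRing (K i)]
    [∀ i, Algebra k (K i)] [∀ i, Module.Finite k (K i)] (h : ∀ i, IsMonogenic k (K i)) :
    IsMonogenic k (∀ i, K i) := by
  induction ι using Finite.induction_empty_option with
  | of_equiv e ih =>
    exact (ih fun a => h (e a)).of_surjective (AlgEquiv.piCongrLeft k K e).toAlgHom
      (AlgEquiv.piCongrLeft k K e).surjective
  | h_empty => exact of_subsingleton _
  | h_option ih =>
    let e : (∀ i, K i) ≃ₐ[k] K none × ∀ i, K (some i) :=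
      AlgEquiv.ofRingEquiv (f := RingEquiv.piOptionEquivProd) fun _ => rfl
    have hsome := ih (K := fun i => K (some i)) fun i => h (some i)
    exact ((h none).prod hsome).of_surjective e.symm.toAlgHom e.symm.surjective

theorem of_isReduced [PerfectField k] [Infinite k] (R : Type*) [CommRing R] [Algebra k R]
    [Module.Finite k R] [IsReduced R] : IsMonogenic k R := by
  have : IsArtinianRing R := .of_finite k R
  let _ (I : MaximalSpectrum R) : Field (R ⧸ I.asIdeal) :=
    @Ideal.Quotient.field _ _ _ I.isMaximal
  have (I : MaximalSpectrum R) : Module.Finite k (R ⧸ I.asIdeal) :=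
    .of_surjective (Ideal.Quotient.mkₐ k I.asIdeal).toLinearMap Ideal.Quotient.mk_surjective
  let e := (IsArtinianRing.equivPi R).restrictScalars k
  exact (pi fun I => of_field _).of_surjective e.symm.toAlgHom e.symm.surjective

end IsMonogenic

namespace Module.End

open Algebra

variable {K V : Type*} [Field K] [PerfectField K] [AddCommGroup V] [Module K V]
  [FiniteDimensional K V]

open scoped IsMulCommutative in
theorem exists_adjoin_pair_eq_adjoin_singleton [Infinite K] {f g : End K V} (comm : Commute f g)
    (hf : f.IsSemisimple) (hg : g.IsSemisimple) : ∃ γ : End K V, K[f, g] = K[γ] := by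
  let R : Type _ := K[f, g]
  have : IsMulCommutative R := isMulCommutative_adjoin K <| by
    rintro a (rfl | rfl) b (rfl | rfl)
    exacts [rfl, comm.eq, comm.symm.eq, rfl]
  have : IsReduced R := ⟨fun r hr => Subtype.ext <|
    eq_zero_of_isNilpotent_isSemisimple (hr.map (K[f, g]).val)
      (IsSemisimple.of_mem_adjoin_pair comm hf hg r.2)⟩
  obtain ⟨γ, hγ⟩ := IsMonogenic.of_isReduced (k := K) R
  refine ⟨γ, le_antisymm (fun a ha => ?_) (adjoin_le (Set.singleton_subset_iff.mpr γ.2))⟩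
  obtain ⟨p, hp⟩ := hγ ⟨a, ha⟩
  have : aeval (γ : End K V) p = a := (aeval_algHom_apply (K[f, g]).val γ p).trans congr($hp.1)
  exact this ▸ aeval_mem_adjoin_singleton K _

theorem exists_isSemisimple_adjoin_eq_adjoin_singleton [Infinite K] {s : Set (End K V)}
    (hs : s.Finite) (comm : ∀ a ∈ s, ∀ b ∈ s, Commute a b)
    (hss : ∀ a ∈ s, a.IsSemisimple) :
    ∃ γ : End K V, γ.IsSemisimple ∧ adjoin K s = K[γ] := by
  induction s, hs using Set.Finite.induction_on with
  | empty => exact ⟨0, isSemisimple_zero, by rw [adjoin_singleton_zero, adjoin_empty]⟩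
  | @insert a s _ _ ih =>
    obtain ⟨γ, hγ, hsγ⟩ := ih (fun x hx y hy => comm x (.inr hx) y (.inr hy))
      (fun x hx => hss x (.inr hx))
    have haγ : Commute a γ := commute_of_mem_adjoin_of_forall_mem_commute
      (hsγ ▸ self_mem_adjoin_singleton K γ) fun x hx => comm a (.inl rfl) x (.inr hx)
    obtain ⟨δ, hδ⟩ := exists_adjoin_pair_eq_adjoin_singleton haγ (hss a (.inl rfl)) hγ
    refine ⟨δ, .of_mem_adjoin_pair haγ (hss a (.inl rfl)) hγ
      (hδ ▸ self_mem_adjoin_singleton K δ), ?_⟩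
    rw [← adjoin_insert_adjoin, hsγ, adjoin_insert_adjoin, hδ]

theorem mem_adjoin_add_of_isNilpotent_of_isSemisimple {n s : End K V} (comm : Commute n s)
    (hn : IsNilpotent n) (hs : s.IsSemisimple) : n ∈ K[n + s] ∧ s ∈ K[n + s] := by
  obtain ⟨n', hn', s', hs', hn'nil, hs'ss, hsum⟩ := (n + s).exists_isNilpotent_isSemisimple
  obtain ⟨rfl, rfl⟩ := isNilpotent_isSemisimple_unique hn'nil hs'ss hn hs
    (commute_of_mem_adjoin_singleton_of_commute hs' (commute_of_mem_adjoin_self hn').symm) comm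
    hsum.symm
  exact ⟨hn', hs'⟩

theorem exists_forall_mem_adjoin_singleton [Infinite K] {ι : Type*} [Finite ι]
    (A : ι → End K V) (comm : ∀ i j, Commute (A i) (A j)) (j₀ : ι)
    (hss : ∀ i ≠ j₀, (A i).IsSemisimple) : ∃ C : End K V, ∀ i, A i ∈ K[C] := by
  obtain ⟨n, hn, s, hs, hnil, hsss, hA⟩ := (A j₀).exists_isNilpotent_isSemisimple
  have comm_adjoin (i : ι) {x : End K V} (hx : x ∈ K[A j₀]) : Commute (A i) x :=
    commute_of_mem_adjoin_singleton_of_commute hx (comm i j₀)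
  let S := insert s (A '' {j₀}ᶜ)
  have hS : ∀ x ∈ S, x = s ∨ ∃ i ≠ j₀, A i = x := by
    rintro x (rfl | ⟨i, hi, rfl⟩)
    exacts [.inl rfl, .inr ⟨i, hi, rfl⟩]
  obtain ⟨γ, hγ, hSγ⟩ := exists_isSemisimple_adjoin_eq_adjoin_singleton (s := S)
    ((Set.toFinite _).insert s)
    (by
      intro x hx y hy
      rcases hS x hx with rfl | ⟨i, -, rfl⟩ <;> rcases hS y hy with rfl | ⟨j, -, rfl⟩
      exacts [.refl _, (comm_adjoin j hs).symm, comm_adjoin i hs, comm i j])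
    (by
      intro x hx
      rcases hS x hx with rfl | ⟨i, hi, rfl⟩
      exacts [hsss, hss i hi])
  have hγS : γ ∈ adjoin K S := by rw [hSγ]; exact self_mem_adjoin_singleton K γ
  have hnγ : Commute n γ := commute_of_mem_adjoin_of_forall_mem_commute hγS fun x hx => by
    rcases hS x hx with rfl | ⟨i, -, rfl⟩
    exacts [commute_of_mem_adjoin_singleton_of_commute hs (commute_of_mem_adjoin_self hn).symm,
      (comm_adjoin i hn).symm]
  obtain ⟨hnC, hγC⟩ := mem_adjoin_add_of_isNilpotent_of_isSemisimple hnγ hnil hγ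
  have hSC : adjoin K S ≤ K[n + γ] := hSγ ▸ adjoin_le (Set.singleton_subset_iff.mpr hγC)
  refine ⟨n + γ, fun i => ?_⟩
  rcases eq_or_ne i j₀ with rfl | hi
  · rw [hA]; exact add_mem hnC (hSC (subset_adjoin (.inl rfl)))
  · exact hSC (subset_adjoin (.inr ⟨i, hi, rfl⟩))

end Module.End

theorem stmt_12 (k : Type*) [Field k] [CharZero k] (n m : ℕ) (hm : 2 ≤ m)
    (A : Fin m → Matrix (Fin n) (Fin n) k)
    (hcomm : ∀ i j, A i * A j = A j * A i)
    (hdiag : {i | ¬ (minpoly k (A i)).Separable}.Subsingleton) :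
    ∃ C : Matrix (Fin n) (Fin n) k, ∀ i, ∃ p : Polynomial k,
      A i = Polynomial.aeval C p := by
  obtain ⟨j₀, hj₀⟩ : ∃ j₀ : Fin m, ∀ i ≠ j₀, (minpoly k (A i)).Separable := by
    by_cases h : ∃ j, ¬ (minpoly k (A j)).Separable
    · obtain ⟨j, hj⟩ := h
      exact ⟨j, fun i hi => by_contra fun hi' => hi (hdiag hi' hj)⟩
    · exact ⟨⟨0, by omega⟩, fun i _ => not_not.mp (not_exists.mp h i)⟩
  let e := Matrix.toLinAlgEquiv' (R := k) (n := Fin n)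
  obtain ⟨C, hC⟩ := Module.End.exists_forall_mem_adjoin_singleton (fun i => e (A i))
    (fun i j => by simp only [Commute, SemiconjBy, ← map_mul, hcomm i j]) j₀
    (fun i hi => Module.End.isSemisimple_of_squarefree_aeval_eq_zero (hj₀ i hi).squarefree
      (by rw [aeval_algEquiv, AlgHom.comp_apply, minpoly.aeval, map_zero]))
  refine ⟨e.symm C, fun i => ?_⟩
  obtain ⟨p, hp⟩ :=
    (AlgHom.mem_range _).mp (Algebra.adjoin_singleton_eq_range_aeval k C ▸ hC i)
  exact ⟨p, by rw [aeval_algHom_apply, hp, AlgEquiv.symm_apply_apply]⟩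
end
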